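/- arXiv:1408.6978 — 4 statements merged into one kernel-verified Lean document; each statement's English description precedes it below -/
import Mathlib

section
/- Let A be an n×n matrix over ZMod 2 that is symmetric, and let p be an index. Let A' be the (n+1)×(n+1) block matrix A' = fromBlocks 1 r c (A + E_{pp}), where r is the row vector equal to the standard basis vector e_p, c is the column vector equal to e_p, and E_{pp} is the matrix with a single 1 in entry (p,p). (A' is the mod-2 intersection matrix after blowing up at a point lying on exactly one exceptional curve E_p: the new exceptional curve is odd, meets only E_p, and the self-intersection parity of E_p flips.) Then det A' = det A. -/
/-! Taking the Schur complement of the new `1` on the diagonal replaces `A + E_pp` by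
`A + E_pp - e_p e_pᵀ = A`, since the outer product `e_p e_pᵀ` is `E_pp`. -/

namespace Matrix

theorem replicateCol_single_mul_replicateRow_single {R n ι : Type*} [NonAssocSemiring R]
    [DecidableEq n] [Fintype ι] [Unique ι] (p : n) :
    replicateCol ι (Pi.single p (1 : R)) * replicateRow ι (Pi.single p (1 : R)) =
      single p p 1 := by
  rw [single_eq_single_vecMulVec_single]
  -- `vecMulVec_eq` uses the `Fintype ι` instance derived from `Unique ι`.
  convert (vecMulVec_eq ι (Pi.single p (1 : R)) (Pi.single p 1)).symm

theorem det_fromBlocks_one_replicate_single {R n ι : Type*} [CommRing R] [Fintype n]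
    [DecidableEq n] [Fintype ι] [DecidableEq ι] [Unique ι] (A : Matrix n n R) (p : n) :
    (fromBlocks (1 : Matrix ι ι R) (replicateRow ι (Pi.single p 1))
      (replicateCol ι (Pi.single p 1)) (A + single p p 1)).det = A.det := by
  rw [det_fromBlocks_one₁₁, replicateCol_single_mul_replicateRow_single, add_sub_cancel_right]

end Matrix

theorem blowup_on_one_curve_det_general {n : ℕ} (A : Matrix (Fin n) (Fin n) (ZMod 2))
    (p : Fin n) :
    (Matrix.fromBlocks (1 : Matrix (Fin 1) (Fin 1) (ZMod 2))
      (Matrix.of fun _ j => (Pi.single p 1 : Fin n → ZMod 2) j)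
      (Matrix.of fun i _ => (Pi.single p 1 : Fin n → ZMod 2) i)
      (A + Matrix.single p p 1)).det = A.det :=
  Matrix.det_fromBlocks_one_replicate_single A p

/-- Blowing up at a point lying on exactly one exceptional curve `E_p` preserves the
determinant of the mod-2 intersection matrix. The new matrix is the block matrix
`fromBlocks 1 r c (A + E_pp)` where `r` (resp. `c`) is the row (resp. column) vector
equal to the standard basis vector `e_p`, and `E_pp = stdBasisMatrix p p 1`. -/
theorem blowup_on_one_curve_det {n : ℕ} (A : Matrix (Fin n) (Fin n) (ZMod 2))
    (hA : A.IsSymm) (p : Fin n) :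
    (Matrix.fromBlocks (1 : Matrix (Fin 1) (Fin 1) (ZMod 2))
      (Matrix.of fun _ j => (Pi.single p 1 : Fin n → ZMod 2) j)
      (Matrix.of fun i _ => (Pi.single p 1 : Fin n → ZMod 2) i)
      (A + Matrix.single p p 1)).det = A.det :=
  blowup_on_one_curve_det_general A p
end

section
/- Let A be an n×n matrix over ZMod 2 that is symmetric, and let p be an index. Let A' be the (n+1)×(n+1) block matrix A' = fromBlocks 1 r c (A + E_{pp}), where r is the row vector equal to the standard basis vector e_p, c is the column vector equal to e_p, and E_{pp} is the matrix with a single 1 in entry (p,p). (A' is the mod-2 intersection matrix after blowing up at a point lying on exactly one exceptional curve E_p.) Then rank A' = rank A + 1; equivalently, the corank is preserved: (n+1) − rank A' = n − rank A. -/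
/-! Clearing the off-diagonal blocks against the invertible corner `1` (a Schur complement step)
turns `A'` into the block-diagonal matrix `diag(1, A + E_pp - e_p e_pᵀ) = diag(1, A)`, and row and
column operations by invertible matrices do not change the rank. -/

open Matrix Module

theorem Submodule.finrank_prod {K M N : Type*} [Field K] [AddCommGroup M] [AddCommGroup N]
    [Module K M] [Module K N] [FiniteDimensional K M] [FiniteDimensional K N]
    (p : Submodule K M) (q : Submodule K N) :
    finrank K (p.prod q) = finrank K p + finrank K q := by
  rw [← Module.finrank_prod, ← LinearMap.finrank_range_of_inj (f := p.subtype.prodMap q.subtype)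
    (Prod.map_injective.2 ⟨p.injective_subtype, q.injective_subtype⟩),
    LinearMap.range_prodMap, p.range_subtype, q.range_subtype]

namespace Matrix

variable {K ι m n : Type*} [Field K] [Fintype m] [Fintype n]

theorem mulVecLin_fromBlocks_zero_zero (A : Matrix m m K) (D : Matrix n n K) :
    (fromBlocks A 0 0 D).mulVecLin =
      (LinearEquiv.sumArrowLequivProdArrow m n K K).symm.toLinearMap ∘ₗ
        A.mulVecLin.prodMap D.mulVecLin ∘ₗ
          (LinearEquiv.sumArrowLequivProdArrow m n K K).toLinearMap := by
  ext x (i | i) <;> simp [fromBlocks_mulVec] <;> rfl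

theorem rank_fromBlocks_zero_zero (A : Matrix m m K) (D : Matrix n n K) :
    (fromBlocks A 0 0 D).rank = A.rank + D.rank := by
  rw [rank, mulVecLin_fromBlocks_zero_zero, LinearMap.range_comp,
    LinearMap.range_comp_of_range_eq_top _ (LinearEquiv.range _), LinearEquiv.finrank_map_eq,
    LinearMap.range_prodMap, Submodule.finrank_prod, rank, rank]

variable [DecidableEq m] [DecidableEq n]

theorem rank_fromBlocks_of_invertible₁₁ (A : Matrix m m K) (B : Matrix m n K) (C : Matrix n m K)
    (D : Matrix n n K) [Invertible A] :
    (fromBlocks A B C D).rank = A.rank + (D - C * ⅟A * B).rank := by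
  have hL : IsUnit (fromBlocks 1 0 (C * ⅟A) (1 : Matrix n n K)).det := by simp
  have hU : IsUnit (fromBlocks 1 (⅟A * B) 0 (1 : Matrix n n K)).det := by simp
  rw [fromBlocks_eq_of_invertible₁₁, rank_mul_eq_left_of_isUnit_det _ _ hU,
    rank_mul_eq_right_of_isUnit_det _ _ hL, rank_fromBlocks_zero_zero]

theorem rank_fromBlocks_one_replicateRow_replicateCol_add_vecMulVec [Fintype ι]
    [DecidableEq ι] [Unique ι] (A : Matrix n n K) (v w : n → K) :
    (fromBlocks 1 (replicateRow ι w) (replicateCol ι v) (A + vecMulVec v w)).rank =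
      A.rank + 1 := by
  let : Invertible (1 : Matrix ι ι K) := invertibleOne
  have hvw : replicateCol ι v * replicateRow ι w = vecMulVec v w := by
    -- `vecMulVec_eq` uses the `Fintype ι` instance derived from `Unique ι`
    convert (vecMulVec_eq ι v w).symm
  rw [rank_fromBlocks_of_invertible₁₁, invOf_one, Matrix.mul_one, hvw, add_sub_cancel_right,
    rank_one, Fintype.card_unique, add_comm]

end Matrix

theorem blowup_on_one_curve_rank_general {n : ℕ} (A : Matrix (Fin n) (Fin n) (ZMod 2))
    (p : Fin n) :
    (Matrix.fromBlocks (1 : Matrix (Fin 1) (Fin 1) (ZMod 2))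
      (Matrix.of fun _ j => (Pi.single p 1 : Fin n → ZMod 2) j)
      (Matrix.of fun i _ => (Pi.single p 1 : Fin n → ZMod 2) i)
      (A + Matrix.single p p 1)).rank = A.rank + 1 := by
  rw [single_eq_single_vecMulVec_single]
  exact rank_fromBlocks_one_replicateRow_replicateCol_add_vecMulVec A _ _

/-- Blowing up at a point lying on exactly one exceptional curve `E_p` increases the
rank of the mod-2 intersection matrix by exactly one, hence preserves the corank. -/
theorem blowup_on_one_curve_rank {n : ℕ} (A : Matrix (Fin n) (Fin n) (ZMod 2))
    (hA : A.IsSymm) (p : Fin n) :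
    (Matrix.fromBlocks (1 : Matrix (Fin 1) (Fin 1) (ZMod 2))
      (Matrix.of fun _ j => (Pi.single p 1 : Fin n → ZMod 2) j)
      (Matrix.of fun i _ => (Pi.single p 1 : Fin n → ZMod 2) i)
      (A + Matrix.single p p 1)).rank = A.rank + 1 :=
  blowup_on_one_curve_rank_general A p
end

section
/- Let A be an n×n matrix over ZMod 2 that is symmetric, and let p ≠ q be two indices with A p q = 1. Let A' be the (n+1)×(n+1) block matrix A' = fromBlocks 1 r c (A + E_{pp} + E_{qq} + E_{pq} + E_{qp}), where r is the row vector e_p + e_q and c is the column vector e_p + e_q. (A' is the mod-2 intersection matrix after blowing up at the intersection point of the two curves E_p and E_q: the new exceptional curve is odd and meets E_p and E_q, the self-intersection parities of E_p and E_q flip, and E_p and E_q become disjoint.) Then det A' = det A. -/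
/-!
By the Schur complement, `det (fromBlocks 1 r c D) = det (D - c * r)`. With `r` and `c` both given
by `e_p + e_q`, the product `c * r` is exactly the correction `E_pp + E_qq + E_pq + E_qp` that was
added to `A`, so the Schur complement is `A` itself.
-/

open Matrix

theorem Matrix.vecMulVec_single_add_single {n R : Type*} [DecidableEq n] [Semiring R] (p q : n) :
    vecMulVec (Pi.single p 1 + Pi.single q 1) (Pi.single p 1 + Pi.single q 1) =
      single p p (1 : R) + single p q 1 + single q p 1 + single q q 1 := by
  simp only [add_vecMulVec, vecMulVec_add, ← single_eq_single_vecMulVec_single]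
  abel

theorem Matrix.det_fromBlocks_one_replicateRow_replicateCol_add_vecMulVec {ι m R : Type*}
    [Unique ι] [DecidableEq ι] [Fintype m] [DecidableEq m] [CommRing R]
    (A : Matrix m m R) (u v : m → R) :
    (fromBlocks 1 (replicateRow ι u) (replicateCol ι v) (A + vecMulVec v u)).det = A.det := by
  rw [det_fromBlocks_one₁₁, ← vecMulVec_eq ι, add_sub_cancel_right]

theorem blowup_on_two_curves_det_general {n : ℕ} (A : Matrix (Fin n) (Fin n) (ZMod 2))
    (p q : Fin n) :
    (Matrix.fromBlocks (1 : Matrix (Fin 1) (Fin 1) (ZMod 2))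
      (Matrix.of fun _ j => (Pi.single p 1 : Fin n → ZMod 2) j + (Pi.single q 1 : Fin n → ZMod 2) j)
      (Matrix.of fun i _ => (Pi.single p 1 : Fin n → ZMod 2) i + (Pi.single q 1 : Fin n → ZMod 2) i)
      (A + Matrix.single p p 1 + Matrix.single q q 1
         + Matrix.single p q 1 + Matrix.single q p 1)).det = A.det := by
  have hD : A + single p p 1 + single q q 1 + single p q 1 + single q p 1 =
      A + vecMulVec (Pi.single p 1 + Pi.single q 1) (Pi.single p 1 + Pi.single q 1) := by
    rw [vecMulVec_single_add_single]
    abel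
  rw [hD]
  exact det_fromBlocks_one_replicateRow_replicateCol_add_vecMulVec A _ _

/-- Blowing up at the intersection point of two exceptional curves `E_p` and `E_q`
preserves the determinant of the mod-2 intersection matrix. -/
theorem blowup_on_two_curves_det {n : ℕ} (A : Matrix (Fin n) (Fin n) (ZMod 2))
    (hA : A.IsSymm) (p q : Fin n) (hpq : p ≠ q) (hApq : A p q = 1) :
    (Matrix.fromBlocks (1 : Matrix (Fin 1) (Fin 1) (ZMod 2))
      (Matrix.of fun _ j => (Pi.single p 1 : Fin n → ZMod 2) j + (Pi.single q 1 : Fin n → ZMod 2) j)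
      (Matrix.of fun i _ => (Pi.single p 1 : Fin n → ZMod 2) i + (Pi.single q 1 : Fin n → ZMod 2) i)
      (A + Matrix.single p p 1 + Matrix.single q q 1
         + Matrix.single p q 1 + Matrix.single q p 1)).det = A.det :=
  blowup_on_two_curves_det_general A p q
end

section
/- Modification M1 preserves the intersection data: let A be an m×m symmetric matrix over ZMod 2 and let q ≠ v be two indices such that the row of A indexed by q equals the standard basis vector e_v (i.e., A q v = 1 and A q k = 0 for every k ≠ v; in particular A q q = 0, so q is an even vertex of valency 1 — a vertex of type Q — attached to v), and suppose A v v = 1 (v is odd). Let B = A + E_{vv} be the matrix obtained by flipping the parity of v. Then det B = det A and rank B = rank A. -/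
/-!
If row `q` of `A` is the basis vector `e_v`, then adding row `q` to row `v` is exactly adding
`E_{vv}`, so `A + E_{vv} = (1 + E_{vq}) A` is `A` multiplied by a transvection, which has
determinant one.
-/

namespace Matrix

variable {n R : Type*} [Fintype n] [DecidableEq n]

theorem single_mul_of_row_eq_single [Semiring R] {A : Matrix n n R} {q v : n}
    (hrow : A q = Pi.single v 1) (i : n) (c : R) :
    single i q c * A = single i v c := by
  rw [single_mul_eq_updateRow_zero, row, hrow, single_eq_updateRow_zero, ← Pi.single_smul,
    smul_eq_mul, mul_one]

theorem add_single_eq_transvection_mul [CommRing R] {A : Matrix n n R} {q v : n}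
    (hrow : A q = Pi.single v 1) (i : n) (c : R) :
    A + single i v c = transvection i q c * A := by
  rw [transvection, add_mul, one_mul, single_mul_of_row_eq_single hrow]

theorem det_add_single_of_row_eq_single [CommRing R] {A : Matrix n n R} {q v : n}
    (hrow : A q = Pi.single v 1) {i : n} (hiq : i ≠ q) (c : R) :
    (A + single i v c).det = A.det := by
  rw [add_single_eq_transvection_mul hrow, det_mul, det_transvection_of_ne i q hiq, one_mul]

theorem rank_add_single_of_row_eq_single [CommRing R] {A : Matrix n n R} {q v : n}
    (hrow : A q = Pi.single v 1) {i : n} (hiq : i ≠ q) (c : R) :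
    (A + single i v c).rank = A.rank := by
  rw [add_single_eq_transvection_mul hrow]
  refine rank_mul_eq_right_of_isUnit_det _ A ?_
  rw [det_transvection_of_ne i q hiq]
  exact isUnit_one

end Matrix

theorem modification_M1_general {m : ℕ} (A : Matrix (Fin m) (Fin m) (ZMod 2))
    (q v : Fin m) (hqv : q ≠ v)
    (hrow : ∀ k, A q k = (Pi.single v 1 : Fin m → ZMod 2) k) :
    (A + Matrix.single v v 1).det = A.det ∧
      (A + Matrix.single v v 1).rank = A.rank :=
  ⟨Matrix.det_add_single_of_row_eq_single (funext hrow) hqv.symm 1,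
    Matrix.rank_add_single_of_row_eq_single (funext hrow) hqv.symm 1⟩

/-- Modification M1: if a vertex `q` of type Q (even, valency 1) is attached to an odd
vertex `v`, then flipping the parity of `v` changes neither the determinant nor the
rank of the mod-2 intersection matrix. -/
theorem modification_M1 {m : ℕ} (A : Matrix (Fin m) (Fin m) (ZMod 2))
    (hA : A.IsSymm) (q v : Fin m) (hqv : q ≠ v)
    (hrow : ∀ k, A q k = (Pi.single v 1 : Fin m → ZMod 2) k)
    (hvv : A v v = 1) :
    (A + Matrix.single v v 1).det = A.det ∧
      (A + Matrix.single v v 1).rank = A.rank :=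
  modification_M1_general A q v hqv hrow
end
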